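/- Let X₁ be a real n×m₁ matrix, X₂ a real n×m₂ matrix, Y₁ a real d×m₁ matrix, Y₂ a real d×m₂ matrix, and β > 0. Then the two-attractor ridge cost J₂(W) = ‖W * X₁ − Y₁‖_F² + ‖W * X₂ − Y₂‖_F² + β ‖W‖_F² has the unique minimizer W = Y_C * X_Cᵀ * (X_C * X_Cᵀ + β • 1)⁻¹, where X_C = [X₁ X₂] and Y_C = [Y₁ Y₂] are the horizontal concatenations. -/

import Mathlib

/-- The squared Frobenius norm of a real matrix. -/
noncomputable def frobSq {n m : Type*} [Fintype n] [Fintype m]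
    (M : Matrix n m ℝ) : ℝ :=
  ∑ i, ∑ j, (M i j) ^ 2

/-! The ridge cost `‖W X - Y‖² + β ‖W‖²` is a quadratic in `W` whose Hessian
`X Xᵀ + β I` is positive definite. Completing the square around the solution `W₀` of the
normal equation `W₀ (X Xᵀ + β I) = Y Xᵀ` gives
`J W = J W₀ + ‖(W - W₀) X‖² + β ‖W - W₀‖²`, so `W₀` is the unique minimizer.
Concatenating columns turns the two-attractor cost into a single ridge cost,
because the squared Frobenius norm is additive over blocks of columns. -/

open Matrix

section FrobSq

variable {m n k : Type*} [Fintype m] [Fintype n] [Fintype k]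

lemma frobSq_nonneg (M : Matrix m n ℝ) : 0 ≤ frobSq M :=
  Finset.sum_nonneg fun _ _ => Finset.sum_nonneg fun _ _ => sq_nonneg _

lemma frobSq_eq_zero_iff {M : Matrix m n ℝ} : frobSq M = 0 ↔ M = 0 := by
  rw [frobSq, Fintype.sum_eq_zero_iff_of_nonneg fun i =>
    Finset.sum_nonneg fun j _ => sq_nonneg (M i j)]
  simp only [Pi.zero_apply, Fintype.sum_eq_zero_iff_of_nonneg fun _ => sq_nonneg _, funext_iff,
    sq_eq_zero_iff, ← Matrix.ext_iff, Matrix.zero_apply]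

lemma frobSq_eq_trace_mul_transpose (M : Matrix m n ℝ) : frobSq M = (M * Mᵀ).trace := by
  simp [frobSq, trace, mul_apply, sq]

lemma frobSq_add (P Q : Matrix m n ℝ) :
    frobSq (P + Q) = frobSq P + frobSq Q + 2 * (P * Qᵀ).trace := by
  have hsymm : (Q * Pᵀ).trace = (P * Qᵀ).trace := by
    rw [← trace_transpose, transpose_mul, transpose_transpose]
  simp only [frobSq_eq_trace_mul_transpose, transpose_add, Matrix.add_mul, Matrix.mul_add,
    trace_add, hsymm]
  ring

lemma frobSq_fromCols (P : Matrix m n ℝ) (Q : Matrix m k ℝ) :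
    frobSq (fromCols P Q) = frobSq P + frobSq Q := by
  simp [frobSq, Fintype.sum_sum_type, Finset.sum_add_distrib]

end FrobSq

section Ridge

variable {m n p : Type*} [Fintype m] [Fintype n] [DecidableEq n]
  (X : Matrix n m ℝ) (Y : Matrix p m ℝ) (β : ℝ)

noncomputable def ridgeSolution : Matrix p n ℝ :=
  Y * Xᵀ * (X * Xᵀ + β • 1)⁻¹

noncomputable def ridgeCost [Fintype p] (W : Matrix p n ℝ) : ℝ :=
  frobSq (W * X - Y) + β * frobSq W

variable {X Y β}

lemma posDef_mul_transpose_add_smul_one (hβ : 0 < β) : (X * Xᵀ + β • 1).PosDef := by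
  refine PosDef.posSemidef_add ?_ ?_
  · simpa only [conjTranspose_eq_transpose_of_trivial] using posSemidef_self_mul_conjTranspose X
  · rw [smul_one_eq_diagonal]
    exact posDef_diagonal_iff.mpr fun _ => hβ

lemma ridgeSolution_mul (hβ : 0 < β) :
    ridgeSolution X Y β * (X * Xᵀ + β • 1) = Y * Xᵀ := by
  have hdet : IsUnit (X * Xᵀ + β • 1).det :=
    (isUnit_iff_isUnit_det _).mp (posDef_mul_transpose_add_smul_one hβ).isUnit
  rw [ridgeSolution, Matrix.mul_assoc, nonsing_inv_mul _ hdet, Matrix.mul_one]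

variable [Fintype p]

lemma ridgeCost_add_of_mul_eq {W₀ : Matrix p n ℝ} (hW₀ : W₀ * (X * Xᵀ + β • 1) = Y * Xᵀ)
    (D : Matrix p n ℝ) :
    ridgeCost X Y β (W₀ + D) = ridgeCost X Y β W₀ + (frobSq (D * X) + β * frobSq D) := by
  have hresidual : (W₀ + D) * X - Y = (W₀ * X - Y) + D * X := by
    rw [Matrix.add_mul]; abel
  have hgradient : (W₀ * X - Y) * (D * X)ᵀ + β • (W₀ * Dᵀ) = 0 := by
    calc (W₀ * X - Y) * (D * X)ᵀ + β • (W₀ * Dᵀ)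
        = (W₀ * (X * Xᵀ + β • 1) - Y * Xᵀ) * Dᵀ := by
          simp only [transpose_mul, Matrix.sub_mul, Matrix.mul_add, Matrix.add_mul,
            Matrix.mul_smul, Matrix.mul_one, Matrix.smul_mul, Matrix.mul_assoc]
          abel
      _ = 0 := by rw [hW₀, sub_self, Matrix.zero_mul]
  have hcross : ((W₀ * X - Y) * (D * X)ᵀ).trace + β * (W₀ * Dᵀ).trace = 0 := by
    simpa only [trace_add, trace_smul, smul_eq_mul, trace_zero] using congrArg trace hgradient
  rw [ridgeCost, ridgeCost, hresidual, frobSq_add, frobSq_add]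
  linear_combination 2 * hcross

lemma ridgeCost_eq_add (hβ : 0 < β) (W : Matrix p n ℝ) :
    ridgeCost X Y β W = ridgeCost X Y β (ridgeSolution X Y β) +
      (frobSq ((W - ridgeSolution X Y β) * X) + β * frobSq (W - ridgeSolution X Y β)) := by
  rw [← ridgeCost_add_of_mul_eq (ridgeSolution_mul hβ), add_sub_cancel]

theorem ridgeCost_ridgeSolution_le (hβ : 0 < β) (W : Matrix p n ℝ) :
    ridgeCost X Y β (ridgeSolution X Y β) ≤ ridgeCost X Y β W := by
  rw [ridgeCost_eq_add hβ W]
  have := frobSq_nonneg ((W - ridgeSolution X Y β) * X)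
  have := frobSq_nonneg (W - ridgeSolution X Y β)
  nlinarith

theorem eq_ridgeSolution_of_ridgeCost_eq (hβ : 0 < β) {W : Matrix p n ℝ}
    (h : ridgeCost X Y β (ridgeSolution X Y β) = ridgeCost X Y β W) :
    W = ridgeSolution X Y β := by
  rw [ridgeCost_eq_add hβ W] at h
  have := frobSq_nonneg ((W - ridgeSolution X Y β) * X)
  have := frobSq_nonneg (W - ridgeSolution X Y β)
  have hzero : frobSq (W - ridgeSolution X Y β) = 0 := by nlinarith
  exact sub_eq_zero.mp (frobSq_eq_zero_iff.mp hzero)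

end Ridge

lemma ridgeCost_fromCols {m₁ m₂ n p : Type*} [Fintype m₁] [Fintype m₂] [Fintype n] [Fintype p]
    (X₁ : Matrix n m₁ ℝ) (X₂ : Matrix n m₂ ℝ) (Y₁ : Matrix p m₁ ℝ) (Y₂ : Matrix p m₂ ℝ)
    (β : ℝ) (W : Matrix p n ℝ) :
    ridgeCost (fromCols X₁ X₂) (fromCols Y₁ Y₂) β W =
      frobSq (W * X₁ - Y₁) + frobSq (W * X₂ - Y₂) + β * frobSq W := by
  have hresidual : W * fromCols X₁ X₂ - fromCols Y₁ Y₂ = fromCols (W * X₁ - Y₁) (W * X₂ - Y₂) := by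
    rw [mul_fromCols]
    ext i (j | j) <;> rfl
  rw [ridgeCost, hresidual, frobSq_fromCols]

/-- The two-attractor ridge cost has the unique minimizer
`W = Y_C X_Cᵀ (X_C X_Cᵀ + β I)⁻¹` built from the horizontally concatenated data. -/
theorem two_attractor_ridge_unique_minimizer {n m₁ m₂ d : ℕ}
    (X₁ : Matrix (Fin n) (Fin m₁) ℝ) (X₂ : Matrix (Fin n) (Fin m₂) ℝ)
    (Y₁ : Matrix (Fin d) (Fin m₁) ℝ) (Y₂ : Matrix (Fin d) (Fin m₂) ℝ)
    (β : ℝ) (hβ : 0 < β) :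
    let J₂ : Matrix (Fin d) (Fin n) ℝ → ℝ := fun W =>
      frobSq (W * X₁ - Y₁) + frobSq (W * X₂ - Y₂) + β * frobSq W
    let XC : Matrix (Fin n) (Fin m₁ ⊕ Fin m₂) ℝ := Matrix.fromCols X₁ X₂
    let YC : Matrix (Fin d) (Fin m₁ ⊕ Fin m₂) ℝ := Matrix.fromCols Y₁ Y₂
    let Wstar : Matrix (Fin d) (Fin n) ℝ :=
      YC * XC.transpose * (XC * XC.transpose + β • (1 : Matrix (Fin n) (Fin n) ℝ))⁻¹
    (∀ W, J₂ Wstar ≤ J₂ W) ∧ (∀ W, J₂ Wstar = J₂ W → W = Wstar) := by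
  intro J₂ XC YC Wstar
  have hJ₂ : J₂ = ridgeCost XC YC β := funext fun W => (ridgeCost_fromCols X₁ X₂ Y₁ Y₂ β W).symm
  have hWstar : Wstar = ridgeSolution XC YC β := rfl
  rw [hJ₂, hWstar]
  exact ⟨ridgeCost_ridgeSolution_le hβ, fun _ => eq_ridgeSolution_of_ridgeCost_eq hβ⟩
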